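/- arXiv:math/0309190 — 9 statements merged into one kernel-verified Lean document; each statement's English description precedes it below -/
import Mathlib

section
/- Let (a_n)_{n≥1} be a sequence of complex numbers and define (b_n)_{n≥1} by n·b_n = Σ_{d|n} μ(n/d)·a_d. Then as formal power series, ∏_{n=1}^∞ (1 - x^n)^{-b_n} = exp(Σ_{n=1}^∞ (a_n/n)·x^n). -/
/-!
Both sides are exponentials: the `n`-th factor is `exp(b_n · ∑_{k≥1} x^{nk}/k)`, and `exp` turns
the finite product into the exponential of a sum, because `y = exp(f)` is the solution of
`y' = f' y`, `y(0) = 1`, and the product of two solutions solves the equation for the sum.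
The coefficient of `x^j` in `∑_n b_n ∑_k x^{nk}/k` is `(1/j) ∑_{d ∣ j} d b_d`, which is `a_j / j`
by Möbius inversion of `n b_n = ∑_{d ∣ n} μ(n/d) a_d`.
-/

open PowerSeries Finset ArithmeticFunction

/-- `expComp f` is the formal power series `exp(f) = ∑ₖ f^k / k!` for a power
series `f` with zero constant term (coefficientwise definition). -/
noncomputable def expComp (f : PowerSeries ℂ) : PowerSeries ℂ :=
  PowerSeries.mk fun n =>
    ∑ k ∈ Finset.range (n + 1), (PowerSeries.coeff n (f ^ k)) / (k.factorial : ℂ)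

/-- `log(1 - x^n) = -∑_{k≥1} x^{nk}/k`, as a formal power series. -/
noncomputable def logOneSubPow (n : ℕ) : PowerSeries ℂ :=
  PowerSeries.mk fun m => if m ≠ 0 ∧ n ∣ m then -(1 / ((m / n : ℕ) : ℂ)) else 0

/-- `(1 - x^n)^(-b) := exp(-b · log(1 - x^n))` for a complex exponent `b`. -/
noncomputable def oneSubPowRpow (n : ℕ) (b : ℂ) : PowerSeries ℂ :=
  expComp ((-b) • logOneSubPow n)

namespace PowerSeries

theorem coeff_pow_eq_zero_of_lt {R : Type*} [CommSemiring R] {f : R⟦X⟧}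
    (hf : constantCoeff f = 0) {n k : ℕ} (h : n < k) : coeff n (f ^ k) = 0 :=
  coeff_of_lt_order n ((Nat.cast_lt.mpr h).trans_le (le_order_pow_of_constantCoeff_eq_zero k hf))

variable {K : Type*} [Field K] [CharZero K]

theorem derivative_exp_subst {f : K⟦X⟧} (hf : constantCoeff f = 0) :
    d⁄dX K ((exp K).subst f) = (exp K).subst f * d⁄dX K f := by
  rw [derivative_subst (HasSubst.of_constantCoeff_zero' hf), derivative_exp]

theorem constantCoeff_exp_subst {f : K⟦X⟧} (hf : constantCoeff f = 0) :
    constantCoeff ((exp K).subst f) = 1 := by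
  rw [← coeff_zero_eq_constantCoeff_apply, coeff_subst' (HasSubst.of_constantCoeff_zero' hf),
    finsum_eq_single _ 0 fun d hd => by simp [hf, hd]]
  simp

theorem eq_of_derivative_eq_mul {y z h : K⟦X⟧} (hy : d⁄dX K y = y * h)
    (hz : d⁄dX K z = z * h) (hz0 : constantCoeff z ≠ 0)
    (hyz : constantCoeff y = constantCoeff z) : y = z := by
  have hzinv : z * z⁻¹ = 1 := PowerSeries.mul_inv_cancel z hz0
  have hquot : y * z⁻¹ = 1 := by
    refine derivative.ext ?_ ?_
    · rw [derivative_one, Derivation.leibniz, derivative_inv', hy, hz, smul_eq_mul, smul_eq_mul]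
      linear_combination (-(y * z⁻¹ * h)) * hzinv
    · simp [hyz, hz0]
  calc y = y * z⁻¹ * z := by rw [mul_assoc, mul_comm z⁻¹, hzinv, mul_one]
    _ = z := by rw [hquot, one_mul]

theorem exp_subst_add {f g : K⟦X⟧} (hf : constantCoeff f = 0) (hg : constantCoeff g = 0) :
    (exp K).subst (f + g) = (exp K).subst f * (exp K).subst g := by
  have hfg : constantCoeff (f + g) = 0 := by simp [hf, hg]
  refine eq_of_derivative_eq_mul (h := d⁄dX K (f + g)) (derivative_exp_subst hfg) ?_ ?_ ?_
  · rw [Derivation.leibniz, derivative_exp_subst hf, derivative_exp_subst hg, map_add]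
    simp only [smul_eq_mul]
    ring
  · simp [constantCoeff_exp_subst hf, constantCoeff_exp_subst hg]
  · simp [constantCoeff_exp_subst hf, constantCoeff_exp_subst hg, constantCoeff_exp_subst hfg]

theorem exp_subst_sum {ι : Type*} (s : Finset ι) {f : ι → K⟦X⟧}
    (hf : ∀ i ∈ s, constantCoeff (f i) = 0) :
    (exp K).subst (∑ i ∈ s, f i) = ∏ i ∈ s, (exp K).subst (f i) := by
  classical
  induction s using Finset.induction_on with
  | empty =>
    rw [sum_empty, prod_empty, subst_zero_eq_C_constantCoeff]
    simp
  | insert i s hi ih =>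
    rw [sum_insert hi, prod_insert hi, exp_subst_add (hf i (mem_insert_self i s))
      (by rw [map_sum]; exact sum_eq_zero fun j hj => hf j (mem_insert_of_mem hj)),
      ih fun j hj => hf j (mem_insert_of_mem hj)]

end PowerSeries

theorem expComp_eq_exp_subst {f : ℂ⟦X⟧} (hf : constantCoeff f = 0) :
    expComp f = (exp ℂ).subst f := by
  ext n
  rw [coeff_subst' (HasSubst.of_constantCoeff_zero' hf), expComp, coeff_mk,
    finsum_eq_sum_of_support_subset (s := range (n + 1))]
  · refine sum_congr rfl fun k _ => ?_
    simp [coeff_exp, div_eq_inv_mul]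
  · intro k hk
    by_contra hkn
    simp only [mem_coe, mem_range, not_lt] at hkn
    simp [coeff_pow_eq_zero_of_lt hf (Nat.lt_of_succ_le hkn)] at hk

theorem coeff_expComp_eq_of_trunc_eq {f g : ℂ⟦X⟧} {m : ℕ}
    (h : trunc (m + 1) f = trunc (m + 1) g) :
    coeff m (expComp f) = coeff m (expComp g) := by
  have hpow : ∀ k, coeff m (f ^ k) = coeff m (g ^ k) := fun k => by
    rw [← coeff_coe_trunc_of_lt (Nat.lt_succ_self m), ← trunc_trunc_pow, h, trunc_trunc_pow,
      coeff_coe_trunc_of_lt (Nat.lt_succ_self m)]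
  simp only [expComp, coeff_mk, hpow]

theorem constantCoeff_logOneSubPow (n : ℕ) : constantCoeff (logOneSubPow n) = 0 := by
  simp [logOneSubPow, ← coeff_zero_eq_constantCoeff_apply]

theorem coeff_logOneSubPow (n : ℕ) {j : ℕ} (hj : j ≠ 0) :
    coeff j (logOneSubPow n) = if n ∣ j then -((n : ℂ) / j) else 0 := by
  rw [logOneSubPow, coeff_mk]
  by_cases hnj : n ∣ j
  · have hn : n ≠ 0 := by rintro rfl; exact hj (zero_dvd_iff.mp hnj)
    rw [if_pos ⟨hj, hnj⟩, if_pos hnj, Nat.cast_div hnj (Nat.cast_ne_zero.mpr hn), one_div_div]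
  · rw [if_neg (fun h => hnj h.2), if_neg hnj]

theorem prod_oneSubPowRpow (s : Finset ℕ) (b : ℕ → ℂ) :
    ∏ n ∈ s, oneSubPowRpow n (b n) = expComp (∑ n ∈ s, (-b n) • logOneSubPow n) := by
  have hc : ∀ n ∈ s, constantCoeff ((-b n) • logOneSubPow n) = 0 := fun n _ => by
    rw [constantCoeff_smul, constantCoeff_logOneSubPow, smul_zero]
  rw [expComp_eq_exp_subst (by rw [map_sum]; exact sum_eq_zero hc), exp_subst_sum s hc]
  exact prod_congr rfl fun n hn => expComp_eq_exp_subst (hc n hn)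

theorem coeff_sum_smul_logOneSubPow (b : ℕ → ℂ) {j m : ℕ} (hj : j ≠ 0) (hjm : j ≤ m) :
    coeff j (∑ n ∈ Icc 1 m, (-b n) • logOneSubPow n) = (∑ d ∈ j.divisors, d * b d) / j := by
  have hdiv : (Icc 1 m).filter (· ∣ j) = j.divisors := by
    ext d
    simp only [mem_filter, mem_Icc, Nat.mem_divisors]
    constructor
    · rintro ⟨-, hd⟩; exact ⟨hd, hj⟩
    · rintro ⟨hd, -⟩
      have hj0 := Nat.pos_of_ne_zero hj
      exact ⟨⟨Nat.pos_of_dvd_of_pos hd hj0, (Nat.le_of_dvd hj0 hd).trans hjm⟩, hd⟩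
  simp only [map_sum, coeff_smul, coeff_logOneSubPow _ hj, smul_eq_mul, mul_ite, mul_zero]
  rw [← sum_filter, hdiv, sum_div]
  exact sum_congr rfl fun d _ => by ring

/-- Since the `n`-th factor is `1 + O(x^n)`, the coefficient of `x^m` of the infinite product is
that of the partial product over `1 ≤ n ≤ m`. -/
theorem stmt_0 (a b : ℕ → ℂ)
    (hb : ∀ n : ℕ, 1 ≤ n → (n : ℂ) * b n =
      ∑ d ∈ n.divisors, (moebius (n / d) : ℂ) * a d) :
    ∀ m : ℕ,
      PowerSeries.coeff m (∏ n ∈ Finset.Icc 1 m, oneSubPowRpow n (b n)) =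
        PowerSeries.coeff m
          (expComp (PowerSeries.mk fun n => if n = 0 then 0 else a n / (n : ℂ))) := by
  intro m
  have hmoebius : ∀ j : ℕ, 0 < j → ∑ d ∈ j.divisors, (d : ℂ) * b d = a j := by
    refine (sum_eq_iff_sum_mul_moebius_eq (f := fun d => (d : ℂ) * b d)).mpr fun n hn => ?_
    rw [Nat.sum_divisorsAntidiagonal' (f := fun x y => ((moebius x : ℤ) : ℂ) * a y)]
    exact (hb n hn).symm
  rw [prod_oneSubPowRpow]
  refine coeff_expComp_eq_of_trunc_eq (Polynomial.ext fun j => ?_)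
  rw [coeff_trunc, coeff_trunc, coeff_mk]
  split_ifs with hjm hj0
  · subst hj0
    simp [coeff_zero_eq_constantCoeff, constantCoeff_smul, constantCoeff_logOneSubPow]
  · rw [coeff_sum_smul_logOneSubPow b hj0 (Nat.lt_succ_iff.mp hjm),
      hmoebius j (Nat.pos_of_ne_zero hj0)]
  · rfl
end

section
/- Let (a_n)_{n≥1} be a sequence of integers. If for every n ≥ 1 the sum Σ_{d|n} μ(n/d)·a_d is divisible by n, then the numbers A_n defined by A_0 = 1 and (n+1)·A_{n+1} = Σ_{k=0}^n A_{n-k}·a_{k+1} are all integers. -/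
open Finset ArithmeticFunction PowerSeries

/-!
Möbius inversion writes `a n = ∑_{m ∣ n} m b_m` with integers `b_m`. The logarithmic derivative
of `(1 - X^m)⁻¹` is `∑_{m ∣ k+1} m X^k`, so the integral power series
`F = ∏_m (1 - X^m)^(-b_m)` satisfies `F' = F · ∑_k a_{k+1} X^k`. Comparing coefficients, this
differential equation is the recurrence defining `A`, hence `A n` is the `n`-th coefficient of
`F`; truncating the product at `m ≤ n` leaves that coefficient unchanged.
-/

namespace PowerSeries

variable {R : Type*} [CommRing R]

noncomputable def logDeriv : Additive R⟦X⟧ˣ →+ R⟦X⟧ :=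
  AddMonoidHom.mk' (fun u => ↑u.toMul⁻¹ * d⁄dX R u.toMul) fun u v => by
    simp only [toMul_add, mul_inv, Units.val_mul, Derivation.leibniz, smul_eq_mul]
    linear_combination (↑v.toMul⁻¹ * d⁄dX R v.toMul) * u.toMul.inv_mul
      + (↑u.toMul⁻¹ * d⁄dX R u.toMul) * v.toMul.inv_mul

theorem derivative_eq_mul_logDeriv (u : R⟦X⟧ˣ) :
    d⁄dX R (u : R⟦X⟧) = (u : R⟦X⟧) * logDeriv (Additive.ofMul u) := by
  show _ = _ * (↑u⁻¹ * d⁄dX R (u : R⟦X⟧))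
  rw [← mul_assoc, Units.mul_inv, one_mul]

theorem succ_mul_coeff_succ_of_derivative_eq_mul {F L : R⟦X⟧} (h : d⁄dX R F = F * L) (n : ℕ) :
    (n + 1) * coeff (n + 1) F = ∑ k ∈ range (n + 1), coeff (n - k) F * coeff k L := by
  have := congrArg (coeff n) h
  rw [coeff_derivative, mul_comm F, coeff_mul, Nat.sum_antidiagonal_eq_sum_range_succ_mk] at this
  rw [mul_comm, this]
  exact sum_congr rfl fun _ _ => mul_comm _ _

noncomputable def oneSubXPowSucc (d : ℕ) : R⟦X⟧ˣ where
  val := 1 - X ^ (d + 1)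
  inv := expand (d + 1) d.succ_ne_zero (mk 1)
  val_inv := by
    simpa [mul_comm] using congrArg (expand (d + 1) d.succ_ne_zero) (mk_one_mul_one_sub_eq_one R)
  inv_val := by
    simpa using congrArg (expand (d + 1) d.succ_ne_zero) (mk_one_mul_one_sub_eq_one R)

theorem coeff_logDeriv_oneSubXPowSucc (d k : ℕ) :
    coeff k (logDeriv (.ofMul (oneSubXPowSucc d : R⟦X⟧ˣ))) =
      if d + 1 ∣ k + 1 then -((d + 1 : ℕ) : R) else 0 := by
  show coeff k (expand (d + 1) d.succ_ne_zero (mk 1) * d⁄dX R (1 - X ^ (d + 1))) = _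
  rw [map_sub, Derivation.map_one_eq_zero, Derivation.leibniz_pow, derivative_X,
    Nat.add_sub_cancel, smul_eq_mul, mul_one, zero_sub, mul_neg, map_neg, mul_smul_comm,
    map_nsmul, mul_comm, coeff_X_pow_mul', coeff_expand, coeff_mk, Pi.one_apply, ← ite_and]
  have hdvd : d ≤ k ∧ d + 1 ∣ k - d ↔ d + 1 ∣ k + 1 := by
    refine ⟨fun ⟨hdk, h⟩ => ?_, fun h => ?_⟩
    · rw [show k + 1 = k - d + (d + 1) by omega]
      exact Nat.dvd_add_self_right.mpr h
    · have hdk : d ≤ k := Nat.le_of_lt_succ (Nat.le_of_dvd k.succ_pos h)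
      rw [show k + 1 = k - d + (d + 1) by omega] at h
      exact ⟨hdk, Nat.dvd_add_self_right.mp h⟩
  simp only [hdvd]
  split_ifs <;> simp

/-- `∏_{m=1}^N (1 - X^m)^(-b m)`. -/
noncomputable def prodInvOneSubXPow (b : ℕ → ℤ) (N : ℕ) : R⟦X⟧ˣ :=
  ∏ d ∈ range N, oneSubXPowSucc d ^ (-b (d + 1))

theorem coeff_logDeriv_prodInvOneSubXPow (b : ℕ → ℤ) {N k : ℕ} (hk : k < N) :
    coeff k (logDeriv (.ofMul (prodInvOneSubXPow b N : R⟦X⟧ˣ))) =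
      ∑ m ∈ (k + 1).divisors, (m : R) * b m := by
  simp only [prodInvOneSubXPow, ofMul_prod, ofMul_zpow, map_sum, map_zsmul,
    coeff_logDeriv_oneSubXPowSucc]
  rw [range_eq_Ico, sum_Ico_add' (fun m => -b m • if m ∣ k + 1 then -(m : R) else 0)]
  simp only [smul_ite, smul_zero, ← sum_filter, neg_smul_neg, zsmul_eq_mul]
  have hfilter : {m ∈ Ico (0 + 1) (N + 1) | m ∣ k + 1} = (k + 1).divisors := by
    ext m
    simp only [mem_filter, mem_Ico, Nat.mem_divisors]
    refine ⟨fun h => ⟨h.2, k.succ_ne_zero⟩, fun h => ⟨⟨Nat.pos_of_dvd_of_pos h.1 k.succ_pos, ?_⟩, h.1⟩⟩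
    have := Nat.le_of_dvd k.succ_pos h.1
    omega
  rw [hfilter]
  exact sum_congr rfl fun m _ => mul_comm _ _

theorem constantCoeff_prodInvOneSubXPow (b : ℕ → ℤ) (N : ℕ) :
    constantCoeff ((prodInvOneSubXPow b N : R⟦X⟧ˣ) : R⟦X⟧) = 1 := by
  have hfactor (d : ℕ) : Units.map constantCoeff.toMonoidHom (oneSubXPowSucc d : R⟦X⟧ˣ) = 1 :=
    Units.ext (by simp [oneSubXPowSucc])
  have hprod : Units.map constantCoeff.toMonoidHom (prodInvOneSubXPow b N : R⟦X⟧ˣ) = 1 := by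
    simp only [prodInvOneSubXPow, map_prod, map_zpow, hfactor, one_zpow, prod_const_one]
  simpa using congrArg Units.val hprod

end PowerSeries

theorem eq_of_succ_mul_eq_sum {K : Type*} [Field K] [CharZero K] {A B c : ℕ → K} {N : ℕ}
    (h0 : A 0 = B 0)
    (hA : ∀ n < N, (n + 1) * A (n + 1) = ∑ k ∈ range (n + 1), A (n - k) * c k)
    (hB : ∀ n < N, (n + 1) * B (n + 1) = ∑ k ∈ range (n + 1), B (n - k) * c k) :
    ∀ n ≤ N, A n = B n := by
  intro n hn
  induction n using Nat.strong_induction_on with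
  | _ n ih =>
    cases n with
    | zero => exact h0
    | succ n =>
      have hsum : ∑ k ∈ range (n + 1), A (n - k) * c k = ∑ k ∈ range (n + 1), B (n - k) * c k :=
        sum_congr rfl fun k _ => by rw [ih (n - k) (by omega) (by omega)]
      exact mul_left_cancel₀ (Nat.cast_add_one_ne_zero n)
        ((hA n hn).trans (hsum.trans (hB n hn).symm))

theorem exists_sum_divisors_mul_eq_of_dvd {a : ℕ → ℤ}
    (hdiv : ∀ n : ℕ, 1 ≤ n → (n : ℤ) ∣ ∑ d ∈ n.divisors, moebius (n / d) * a d) :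
    ∃ b : ℕ → ℤ, ∀ n > 0, ∑ m ∈ n.divisors, m * b m = a n := by
  refine ⟨fun n => (∑ d ∈ n.divisors, moebius (n / d) * a d) / n,
    sum_eq_iff_sum_mul_moebius_eq.mpr fun n hn => ?_⟩
  simp only [Int.cast_id]
  rw [Nat.sum_divisorsAntidiagonal' (fun x y => moebius x * a y)]
  exact (Int.mul_ediv_cancel' (hdiv n hn)).symm

theorem stmt_2 (a : ℕ → ℤ)
    (hdiv : ∀ n : ℕ, 1 ≤ n →
      (n : ℤ) ∣ ∑ d ∈ n.divisors, moebius (n / d) * a d)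
    (A : ℕ → ℚ) (hA0 : A 0 = 1)
    (hArec : ∀ n : ℕ, (n + 1 : ℚ) * A (n + 1) =
      ∑ k ∈ Finset.range (n + 1), A (n - k) * (a (k + 1) : ℚ)) :
    ∀ n : ℕ, ∃ m : ℤ, A n = (m : ℚ) := by
  intro n
  obtain ⟨b, hb⟩ := exists_sum_divisors_mul_eq_of_dvd hdiv
  set F : ℤ⟦X⟧ˣ := prodInvOneSubXPow b n
  have hlog (k : ℕ) (hk : k < n) : coeff k (logDeriv (.ofMul F)) = a (k + 1) := by
    rw [coeff_logDeriv_prodInvOneSubXPow b hk, ← hb (k + 1) k.succ_pos]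
    simp only [Int.cast_id]
  have hF (m : ℕ) (hm : m < n) : (m + 1 : ℚ) * ((coeff (m + 1) (F : ℤ⟦X⟧) : ℤ) : ℚ) =
      ∑ k ∈ range (m + 1), ((coeff (m - k) (F : ℤ⟦X⟧) : ℤ) : ℚ) * (a (k + 1) : ℚ) := by
    have := succ_mul_coeff_succ_of_derivative_eq_mul (derivative_eq_mul_logDeriv F) m
    rw [sum_congr rfl fun k hk => by rw [hlog k (by have := mem_range.mp hk; omega)]] at this
    exact_mod_cast this
  refine ⟨coeff n (F : ℤ⟦X⟧), eq_of_succ_mul_eq_sum (B := fun m => ((coeff m (F : ℤ⟦X⟧) : ℤ) : ℚ))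
    ?_ (fun m _ => hArec m) hF n le_rfl⟩
  rw [hA0, coeff_zero_eq_constantCoeff_apply, constantCoeff_prodInvOneSubXPow, Int.cast_one]
end

section
/- Let (a_n)_{n≥1} be a sequence of integers. If the numbers A_n defined by A_0 = 1 and (n+1)·A_{n+1} = Σ_{k=0}^n A_{n-k}·a_{k+1} are all integers, then for every n ≥ 1 the sum Σ_{d|n} μ(n/d)·a_d is divisible by n. -/
/-!
With `F = ∑ Aₙ Xⁿ` and `S = ∑_{n ≥ 1} aₙ Xⁿ`, the recurrence says `θ F = F S` for the Euler
operator `θ = X d/dX`: `S` is the `θ`-logarithmic derivative of `F`, and `F` has integer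
coefficients. Put `cₙ = ∑_{d ∣ n} μ(n/d) a_d`, so that `aₙ = ∑_{d ∣ n} c_d`, and argue by strong
induction on `n`. If `d ∣ c_d` for all `d < n`, the series `G = ∏_{d < n} (1 - X^d)^(-c_d/d)` has
integer coefficients and `θ`-logarithmic derivative `T = ∑_{d < n} c_d X^d / (1 - X^d)`, whose
`m`-th coefficient is `∑_{d ∣ m, d < n} c_d`. So `T` agrees with `S` below degree `n`, and
`Tₙ = aₙ - cₙ`. Comparing `θ F = F S` with `θ G = G T` coefficientwise, `F` and `G` agree below
degree `n`, and in degree `n` this gives `n (Fₙ - Gₙ) = Sₙ - Tₙ = cₙ`.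
-/

open Finset ArithmeticFunction PowerSeries

section LogDeriv

variable {R A : Type*} [CommRing R] [CommRing A] [Algebra R A]

def IsLogDeriv (D : Derivation R A A) (f b : A) : Prop := D f = f * b

namespace IsLogDeriv

variable {D : Derivation R A A} {f g b c : A}

theorem mul (hf : IsLogDeriv D f b) (hg : IsLogDeriv D g c) :
    IsLogDeriv D (f * g) (b + c) := by
  unfold IsLogDeriv at *
  rw [D.leibniz, smul_eq_mul, smul_eq_mul, hf, hg]
  ring

theorem pow (hf : IsLogDeriv D f b) (k : ℕ) : IsLogDeriv D (f ^ k) (k * b) := by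
  unfold IsLogDeriv at *
  rw [D.leibniz_pow, hf, smul_eq_mul, nsmul_eq_mul]
  rcases k with _ | k
  · simp
  · rw [pow_succ]
    push_cast
    ring

theorem finset_prod {ι : Type*} {s : Finset ι} {f b : ι → A}
    (h : ∀ i ∈ s, IsLogDeriv D (f i) (b i)) : IsLogDeriv D (∏ i ∈ s, f i) (∑ i ∈ s, b i) := by
  induction s using Finset.cons_induction with
  | empty => simp [IsLogDeriv]
  | cons i s his ih =>
    rw [prod_cons, sum_cons]
    exact (h i (mem_cons_self i s)).mul (ih fun j hj => h j (mem_cons_of_mem hj))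

theorem units_inv {u : Aˣ} (hu : IsLogDeriv D u b) : IsLogDeriv D ↑u⁻¹ (-b) := by
  unfold IsLogDeriv at *
  rw [D.leibniz_of_mul_eq_one u.inv_mul, hu, smul_eq_mul]
  linear_combination (-(↑u⁻¹ : A) * b) * u.inv_mul

theorem units_zpow {u : Aˣ} (hu : IsLogDeriv D u b) (k : ℤ) :
    IsLogDeriv D ↑(u ^ k) (k * b) := by
  rcases k with k | k
  · simpa using hu.pow k
  · have hpow : IsLogDeriv D ↑(u ^ (k + 1)) ((k + 1 : ℕ) * b) := by
      rw [Units.val_pow_eq_pow_val]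
      exact hu.pow _
    rw [zpow_negSucc, Int.cast_negSucc, neg_mul]
    exact hpow.units_inv

end IsLogDeriv

end LogDeriv

namespace PowerSeries

variable {R : Type*} [CommRing R]

variable (R) in
noncomputable def eulerDeriv : Derivation R R⟦X⟧ R⟦X⟧ := (X : R⟦X⟧) • d⁄dX R

theorem eulerDeriv_apply (f : R⟦X⟧) : eulerDeriv R f = X * d⁄dX R f := rfl

theorem coeff_eulerDeriv (f : R⟦X⟧) (n : ℕ) : coeff n (eulerDeriv R f) = n * coeff n f := by
  rw [eulerDeriv_apply]
  rcases n with _ | n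
  · simp
  · rw [coeff_succ_X_mul, coeff_derivative]
    push_cast
    ring

theorem isLogDeriv_mk_of_recurrence {u α : ℕ → R}
    (h : ∀ n : ℕ, ((n : R) + 1) * u (n + 1) = ∑ k ∈ range (n + 1), u (n - k) * α (k + 1)) :
    IsLogDeriv (eulerDeriv R) (PowerSeries.mk u) (X * PowerSeries.mk fun k => α (k + 1)) := by
  ext (_ | n)
  · simp [coeff_eulerDeriv]
  · rw [coeff_eulerDeriv, coeff_mk, mul_left_comm, coeff_succ_X_mul, mul_comm (PowerSeries.mk u),
      coeff_mul, Nat.sum_antidiagonal_eq_sum_range_succ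
        fun i j => coeff i (PowerSeries.mk _) * coeff j (PowerSeries.mk u)]
    push_cast
    rw [h n]
    exact sum_congr rfl fun k _ => by simp [mul_comm]

section OneSubXPow

variable (R) in
/-- Junk value `1` when `d = 0`, where `1 - X ^ d = 0` is not a unit. -/
noncomputable def oneSubXPow (d : ℕ) : R⟦X⟧ˣ :=
  if hd : d = 0 then 1 else
    Units.mkOfMulEqOne (1 - X ^ d) (expand d hd (PowerSeries.mk 1)) <| by
      rw [mul_comm, ← expand_X d hd, ← map_one (expand d hd), ← map_sub, ← map_mul,
        mk_one_mul_one_sub_eq_one, map_one]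

variable {d : ℕ} (hd : d ≠ 0)
include hd

theorem val_oneSubXPow : (oneSubXPow R d : R⟦X⟧) = 1 - X ^ d := by
  simp [oneSubXPow, hd]

theorem val_inv_oneSubXPow : (↑(oneSubXPow R d)⁻¹ : R⟦X⟧) = expand d hd (PowerSeries.mk 1) := by
  rw [oneSubXPow, dif_neg hd]
  rfl

theorem coeff_val_inv_oneSubXPow_sub_one {m : ℕ} (hm : m ≠ 0) :
    coeff m (↑(oneSubXPow R d)⁻¹ - 1 : R⟦X⟧) = if d ∣ m then 1 else 0 := by
  simp [val_inv_oneSubXPow hd, coeff_expand, hm, coeff_one]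

theorem constantCoeff_val_oneSubXPow_zpow (k : ℤ) :
    constantCoeff (↑(oneSubXPow R d ^ k) : R⟦X⟧) = 1 := by
  let ε : R⟦X⟧ˣ →* Rˣ := Units.map (constantCoeff (R := R) : R⟦X⟧ →* R)
  have hε : ε (oneSubXPow R d) = 1 := Units.ext (by simp [ε, val_oneSubXPow hd, zero_pow hd])
  have h := congrArg Units.val (map_zpow ε (oneSubXPow R d) k)
  rwa [hε, one_zpow, Units.coe_map] at h

theorem isLogDeriv_oneSubXPow :
    IsLogDeriv (eulerDeriv R) (oneSubXPow R d) (-d * (↑(oneSubXPow R d)⁻¹ - 1)) := by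
  have hX : eulerDeriv R ((X : R⟦X⟧) ^ d) = (d : R⟦X⟧) * X ^ d := by
    rw [eulerDeriv_apply, Derivation.leibniz_pow, derivative_X (R := R), smul_eq_mul, mul_one,
      nsmul_eq_mul, mul_left_comm, mul_pow_sub_one hd]
  have hinv := (oneSubXPow R d).mul_inv
  rw [val_oneSubXPow hd] at hinv
  rw [IsLogDeriv, val_oneSubXPow hd, map_sub, Derivation.map_one_eq_zero, hX]
  linear_combination (d : R⟦X⟧) * hinv

theorem isLogDeriv_oneSubXPow_zpow (k : ℤ) :
    IsLogDeriv (eulerDeriv R) ↑(oneSubXPow R d ^ (-k))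
      (C ((k : R) * d) * (↑(oneSubXPow R d)⁻¹ - 1)) := by
  convert (isLogDeriv_oneSubXPow hd).units_zpow (-k) using 1
  simp only [map_mul, map_intCast, map_natCast, Int.cast_neg]
  ring

end OneSubXPow

theorem exists_isLogDeriv_coeff_eq_sum_filter_dvd (s : Finset ℕ) (hs : 0 ∉ s) (b : ℕ → ℤ) :
    ∃ G T : R⟦X⟧, constantCoeff G = 1 ∧ IsLogDeriv (eulerDeriv R) G T ∧
      ∀ m ≠ 0, coeff m T = ∑ d ∈ s with d ∣ m, (b d : R) * d := by
  have hs' : ∀ d ∈ s, d ≠ 0 := fun d hd h => hs (h ▸ hd)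
  refine ⟨↑(∏ d ∈ s, oneSubXPow R d ^ (-b d)),
    ∑ d ∈ s, C ((b d : R) * d) * (↑(oneSubXPow R d)⁻¹ - 1), ?_, ?_, fun m hm => ?_⟩
  · rw [Units.coe_prod, map_prod]
    exact prod_eq_one fun d hd => constantCoeff_val_oneSubXPow_zpow (hs' d hd) _
  · rw [Units.coe_prod]
    exact IsLogDeriv.finset_prod fun d hd => isLogDeriv_oneSubXPow_zpow (hs' d hd) _
  · rw [map_sum, sum_filter]
    refine sum_congr rfl fun d hd => ?_
    rw [coeff_C_mul, coeff_val_inv_oneSubXPow_sub_one (hs' d hd) hm, mul_ite, mul_one, mul_zero]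

section Comparison

variable {F G S T : R⟦X⟧}

theorem constantCoeff_eq_zero_of_isLogDeriv (hF0 : constantCoeff F = 1)
    (hF : IsLogDeriv (eulerDeriv R) F S) : constantCoeff S = 0 := by
  have h := congrArg (coeff 0) hF
  rwa [coeff_eulerDeriv, Nat.cast_zero, zero_mul, coeff_zero_eq_constantCoeff_apply, map_mul, hF0,
    one_mul, eq_comm] at h

theorem natCast_mul_coeff_sub_eq_sum (hF : IsLogDeriv (eulerDeriv R) F S)
    (hG : IsLogDeriv (eulerDeriv R) G T) (m : ℕ) :
    m * (coeff m F - coeff m G) =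
      ∑ p ∈ antidiagonal m, (coeff p.1 F * coeff p.2 S - coeff p.1 G * coeff p.2 T) := by
  rw [mul_sub, ← coeff_eulerDeriv, ← coeff_eulerDeriv, hF, hG, coeff_mul, coeff_mul,
    sum_sub_distrib]

variable [IsDomain R] [CharZero R] (hF0 : constantCoeff F = 1) (hG0 : constantCoeff G = 1)
  (hF : IsLogDeriv (eulerDeriv R) F S) (hG : IsLogDeriv (eulerDeriv R) G T) {n : ℕ}
  (hST : ∀ j, 0 < j → j < n → coeff j S = coeff j T)
include hF0 hG0 hF hG hST

theorem coeff_eq_of_isLogDeriv_of_lt {m : ℕ} (hm : m < n) : coeff m F = coeff m G := by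
  induction m using Nat.strong_induction_on with
  | _ m ih =>
  have hS0 := constantCoeff_eq_zero_of_isLogDeriv hF0 hF
  have hT0 := constantCoeff_eq_zero_of_isLogDeriv hG0 hG
  have hsum : (m : R) * (coeff m F - coeff m G) = 0 := by
    rw [natCast_mul_coeff_sub_eq_sum hF hG]
    refine sum_eq_zero fun p hp => ?_
    rw [HasAntidiagonal.mem_antidiagonal] at hp
    rcases Nat.eq_zero_or_pos p.2 with h | h
    · simp [h, hS0, hT0]
    · rw [ih p.1 (by omega) (by omega), hST p.2 h (by omega), sub_self]
  rcases mul_eq_zero.mp hsum with h | h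
  · obtain rfl : m = 0 := by exact_mod_cast h
    simp [hF0, hG0]
  · exact sub_eq_zero.mp h

theorem natCast_mul_coeff_sub_eq_coeff_sub :
    n * (coeff n F - coeff n G) = coeff n S - coeff n T := by
  have hS0 := constantCoeff_eq_zero_of_isLogDeriv hF0 hF
  have hT0 := constantCoeff_eq_zero_of_isLogDeriv hG0 hG
  rw [natCast_mul_coeff_sub_eq_sum hF hG, sum_eq_single_of_mem (0, n) (by simp)]
  · simp [hF0, hG0]
  · intro p hp hp0
    rw [HasAntidiagonal.mem_antidiagonal] at hp
    rcases Nat.eq_zero_or_pos p.2 with h | h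
    · simp [h, hS0, hT0]
    · have h1 : p.1 ≠ 0 := fun h1 => hp0 (Prod.ext h1 (by simp; omega))
      rw [coeff_eq_of_isLogDeriv_of_lt hF0 hG0 hF hG hST (by omega : p.1 < n),
        hST p.2 h (by omega), sub_self]

end Comparison

end PowerSeries

theorem sum_divisors_sum_moebius_mul {R : Type*} [Ring R] (f : ℕ → R) {m : ℕ} (hm : 0 < m) :
    ∑ d ∈ m.divisors, ∑ e ∈ d.divisors, (moebius (d / e) : R) * f e = f m := by
  refine sum_eq_iff_sum_mul_moebius_eq.mpr (fun k _ => ?_) m hm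
  exact Nat.sum_divisorsAntidiagonal' (fun i j => (moebius i : R) * f j)

theorem Nat.filter_dvd_Ico_one_eq_divisors {m n : ℕ} (hm : 0 < m) (hmn : m < n) :
    {d ∈ Ico 1 n | d ∣ m} = m.divisors := by
  ext d
  simp only [mem_filter, mem_Ico, Nat.mem_divisors]
  constructor
  · rintro ⟨-, hd⟩
    exact ⟨hd, hm.ne'⟩
  · rintro ⟨hd, -⟩
    exact ⟨⟨Nat.pos_of_dvd_of_pos hd hm, (Nat.le_of_dvd hm hd).trans_lt hmn⟩, hd⟩

theorem dvd_sum_moebius_mul_coeff_of_isLogDeriv {F S : ℤ⟦X⟧} (hF0 : constantCoeff F = 1)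
    (hF : IsLogDeriv (eulerDeriv ℤ) F S) {n : ℕ} (hn : 0 < n) :
    (n : ℤ) ∣ ∑ d ∈ n.divisors, (moebius (n / d) : ℤ) * coeff d S := by
  set c : ℕ → ℤ := fun m => ∑ d ∈ m.divisors, (moebius (m / d) : ℤ) * coeff d S
  have hc : ∀ m > 0, ∑ d ∈ m.divisors, c d = coeff m S := fun m hm =>
    sum_divisors_sum_moebius_mul (fun d => coeff d S) hm
  induction n using Nat.strong_induction_on with
  | _ n ih =>
  obtain ⟨G, T, hG0, hG, hT⟩ :=
    exists_isLogDeriv_coeff_eq_sum_filter_dvd (R := ℤ) (Ico 1 n) (by simp) fun d => c d / d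
  have hTc : ∀ m ≠ 0, coeff m T = ∑ d ∈ Ico 1 n with d ∣ m, c d := fun m hm => by
    rw [hT m hm]
    refine sum_congr rfl fun d hd => ?_
    simp only [mem_filter, mem_Ico] at hd
    exact Int.ediv_mul_cancel (ih d hd.1.2 hd.1.1)
  have hST : ∀ j, 0 < j → j < n → coeff j S = coeff j T := fun j hj hjn => by
    rw [hTc j hj.ne', Nat.filter_dvd_Ico_one_eq_divisors hj hjn, hc j hj]
  have hTn : coeff n T = coeff n S - c n := by
    rw [hTc n hn.ne', ← Nat.properDivisors, ← hc n hn, ← Nat.cons_self_properDivisors hn.ne',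
      sum_cons, add_sub_cancel_left]
  have hcomp := natCast_mul_coeff_sub_eq_coeff_sub hF0 hG0 hF hG hST
  rw [hTn, sub_sub_cancel] at hcomp
  exact ⟨_, hcomp.symm⟩

theorem stmt_3 (a : ℕ → ℤ) (A : ℕ → ℚ) (hA0 : A 0 = 1)
    (hArec : ∀ n : ℕ, (n + 1 : ℚ) * A (n + 1) =
      ∑ k ∈ Finset.range (n + 1), A (n - k) * (a (k + 1) : ℚ))
    (hint : ∀ n : ℕ, ∃ m : ℤ, A n = (m : ℚ)) :
    ∀ n : ℕ, 1 ≤ n →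
      (n : ℤ) ∣ ∑ d ∈ n.divisors, moebius (n / d) * a d := by
  choose B hB using hint
  have hB0 : constantCoeff (PowerSeries.mk B) = 1 := by
    rw [← coeff_zero_eq_constantCoeff_apply, coeff_mk]
    exact_mod_cast (hB 0).symm.trans hA0
  have hBrec : ∀ n : ℕ, ((n : ℤ) + 1) * B (n + 1) =
      ∑ k ∈ range (n + 1), B (n - k) * a (k + 1) := fun n => by
    have h := hArec n
    simp only [hB] at h
    exact_mod_cast h
  intro n hn
  convert dvd_sum_moebius_mul_coeff_of_isLogDeriv hB0 (isLogDeriv_mk_of_recurrence hBrec) hn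
    using 3 with d hd
  obtain ⟨e, rfl⟩ := Nat.exists_eq_succ_of_ne_zero (Nat.pos_of_mem_divisors hd).ne'
  rw [coeff_succ_X_mul, coeff_mk]
end

section
/- Let (a_n)_{n≥1} be a sequence of integers. Then n divides Σ_{d|n} μ(n/d)·a_d for all n ≥ 1 if and only if for every prime p and all natural numbers n, α with gcd(p, n) = 1 and α ≥ 1, one has a_{n·p^α} ≡ a_{n·p^{α-1}} (mod p^α). -/
/-!
Write `(μ⋆a)(n) = ∑_{d ∣ n} μ(n/d) a_d`. For `p ∤ m` and `α ≥ 1`, every divisor of `m p^α` is uniquely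
`e p^j` with `e ∣ m`, and `μ(p^j) = 0` for `j ≥ 2`, so `(μ⋆a)(m p^α) = (μ⋆g)(m)` with
`g(e) = a(e p^α) - a(e p^(α-1))`. Hence if `p^α ∣ g(e)` for all `e`, then `p^α ∣ (μ⋆a)(m p^α)`, and
`n ∣ (μ⋆a)(n)` follows one prime power of `n` at a time. Conversely, if `n ∣ (μ⋆a)(n)` for all `n`,
then `p^α ∣ (μ⋆g)(e)` for every `e ∣ m`, and Möbius inversion `g(m) = ∑_{e ∣ m} (μ⋆g)(e)` gives
`p^α ∣ g(m)`.
-/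

open Finset ArithmeticFunction
open scoped ArithmeticFunction.Moebius

theorem Int.natCast_dvd_of_forall_prime_pow_factorization_dvd {n : ℕ} {x : ℤ} (hn : n ≠ 0)
    (h : ∀ p, p.Prime → p ∣ n → (p : ℤ) ^ n.factorization p ∣ x) : (n : ℤ) ∣ x := by
  rw [Int.natCast_dvd, Nat.dvd_iff_prime_pow_dvd_dvd]
  intro p k hp hpk
  rcases k.eq_zero_or_pos with rfl | hk
  · simp
  rw [← Int.natCast_dvd, Nat.cast_pow]
  exact (pow_dvd_pow _ ((hp.pow_dvd_iff_le_factorization hn).mp hpk)).trans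
    (h p hp ((dvd_pow_self p hk.ne').trans hpk))

section MoebiusTransform

variable {R : Type*} [CommRing R]

def moebiusTransform (a : ℕ → R) (n : ℕ) : R :=
  ∑ d ∈ n.divisors, (μ (n / d) : R) * a d

theorem Nat.Coprime.sum_divisors_mul_eq_sum_sum {M : Type*} [AddCommMonoid M] {m n : ℕ}
    (hmn : m.Coprime n) (f : ℕ → M) :
    ∑ d ∈ (m * n).divisors, f d = ∑ e ∈ m.divisors, ∑ k ∈ n.divisors, f (e * k) := by
  rw [hmn.divisors_mul, sum_map, ← sum_product']
  exact sum_attach _ fun x : ℕ × ℕ => f (x.1 * x.2)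

theorem moebiusTransform_mul_of_coprime (a : ℕ → R) {m n : ℕ} (hmn : m.Coprime n) :
    moebiusTransform a (m * n) =
      ∑ e ∈ m.divisors, (μ (m / e) : R) * moebiusTransform (fun k => a (e * k)) n := by
  rw [moebiusTransform, hmn.sum_divisors_mul_eq_sum_sum]
  refine sum_congr rfl fun e he => ?_
  rw [moebiusTransform, mul_sum]
  refine sum_congr rfl fun k hk => ?_
  have he : e ∣ m := Nat.dvd_of_mem_divisors he
  have hk : k ∣ n := Nat.dvd_of_mem_divisors hk
  rw [← Nat.div_mul_div_comm he hk, isMultiplicative_moebius.map_mul_of_coprime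
    ((hmn.coprime_div_left he).coprime_div_right hk), Int.cast_mul, mul_assoc]

theorem moebiusTransform_prime_pow (g : ℕ → R) {p α : ℕ} (hp : p.Prime) (hα : α ≠ 0) :
    moebiusTransform g (p ^ α) = g (p ^ α) - g (p ^ (α - 1)) := by
  obtain ⟨β, rfl⟩ := Nat.exists_eq_add_one_of_ne_zero hα
  have hvanish : ∀ j ∈ range β, (μ (p ^ (β + 1) / p ^ j) : R) * g (p ^ j) = 0 := by
    intro j hj
    rw [mem_range] at hj
    rw [Nat.pow_div (by omega) hp.pos, moebius_apply_prime_pow hp (by omega),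
      if_neg (by omega), Int.cast_zero, zero_mul]
  rw [moebiusTransform, Nat.sum_divisors_prime_pow hp, sum_range_succ, sum_range_succ,
    sum_eq_zero hvanish, Nat.div_self (pow_pos hp.pos _), Nat.pow_div (by omega) hp.pos,
    Nat.add_sub_cancel_left, pow_one, moebius_apply_prime hp, moebius_apply_one]
  push_cast
  ring

theorem moebiusTransform_mul_prime_pow (a : ℕ → R) {p m α : ℕ} (hp : p.Prime) (hpm : ¬p ∣ m)
    (hα : α ≠ 0) :
    moebiusTransform a (m * p ^ α) =
      moebiusTransform (fun e => a (e * p ^ α) - a (e * p ^ (α - 1))) m := by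
  have hcop : m.Coprime (p ^ α) := ((hp.coprime_iff_not_dvd.mpr hpm).pow_left α).symm
  rw [moebiusTransform_mul_of_coprime a hcop]
  exact sum_congr rfl fun e _ => by rw [moebiusTransform_prime_pow _ hp hα]

theorem sum_divisors_moebiusTransform (g : ℕ → R) {n : ℕ} (hn : 0 < n) :
    ∑ d ∈ n.divisors, moebiusTransform g d = g n := by
  refine sum_eq_iff_sum_mul_moebius_eq.mpr (fun n _ => ?_) n hn
  exact Nat.sum_divisorsAntidiagonal' (fun i j => (μ i : R) * g j)

theorem dvd_of_forall_dvd_moebiusTransform {g : ℕ → R} {c : R} {n : ℕ} (hn : 0 < n)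
    (h : ∀ d ∈ n.divisors, c ∣ moebiusTransform g d) : c ∣ g n :=
  sum_divisors_moebiusTransform g hn ▸ dvd_sum h

theorem dvd_moebiusTransform_of_forall_dvd {g : ℕ → R} {c : R} {n : ℕ}
    (h : ∀ d ∈ n.divisors, c ∣ g d) : c ∣ moebiusTransform g n :=
  dvd_sum fun d hd => dvd_mul_of_dvd_right (h d hd) _

end MoebiusTransform

theorem stmt_4 (a : ℕ → ℤ) :
    (∀ n : ℕ, 1 ≤ n → (n : ℤ) ∣ ∑ d ∈ n.divisors, moebius (n / d) * a d) ↔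
    (∀ p n α : ℕ, p.Prime → 0 < n → Nat.Coprime p n → 1 ≤ α →
      (p : ℤ) ^ α ∣ a (n * p ^ α) - a (n * p ^ (α - 1))) := by
  change (∀ n : ℕ, 1 ≤ n → (n : ℤ) ∣ moebiusTransform a n) ↔ _
  constructor
  · intro h p n α hp hn hcop hα
    have hpn : ¬p ∣ n := hp.coprime_iff_not_dvd.mp hcop
    refine dvd_of_forall_dvd_moebiusTransform (g := fun e => a (e * p ^ α) - a (e * p ^ (α - 1)))
      hn fun d hd => ?_
    have hpd : ¬p ∣ d := fun hpd => hpn (hpd.trans (Nat.dvd_of_mem_divisors hd))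
    rw [← moebiusTransform_mul_prime_pow a hp hpd (by omega)]
    have hdp := h (d * p ^ α) (Nat.mul_pos (Nat.pos_of_mem_divisors hd) (pow_pos hp.pos α))
    exact (Dvd.intro_left (d : ℤ) (by push_cast; rfl)).trans hdp
  · intro h n hn
    have hn0 : n ≠ 0 := by omega
    refine Int.natCast_dvd_of_forall_prime_pow_factorization_dvd hn0 fun p hp hpn => ?_
    have hα : n.factorization p ≠ 0 := (hp.factorization_pos_of_dvd hn0 hpn).ne'
    have hsplit : ordCompl[p] n * p ^ n.factorization p = n := by
      rw [mul_comm, Nat.ordProj_mul_ordCompl_eq_self]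
    conv_rhs => rw [← hsplit]
    rw [moebiusTransform_mul_prime_pow a hp (Nat.not_dvd_ordCompl hp hn0) hα]
    exact dvd_moebiusTransform_of_forall_dvd fun e he => h p e _ hp (Nat.pos_of_mem_divisors he)
      ((Nat.coprime_ordCompl hp hn0).coprime_dvd_right (Nat.dvd_of_mem_divisors he)) (by omega)
end

section
/- Suppose the sequence of integers (a_m)_{m≥1} satisfies: for every prime p, all e ≥ 1, n ≥ 1, m ≥ 0 with p^{e-1}(p-1) | w, one has Σ_{s=0}^n (-1)^s C(n,s) a_{m+sw} ≡ 0 (mod gcd(p^m, p^{ne})). Then for every natural number b, every prime p, every n coprime to p, and every α ≥ 1: a_{b+n·p^α} ≡ a_{b+n·p^{α-1}} (mod p^α). -/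
/-!
Only the first-order case `n = 1` of the Kummer congruences is needed: it says that
`a (m + w) ≡ a m (mod p ^ min m e)` whenever `p ^ (e - 1) * (p - 1) ∣ w`. Taking
`m = b + n * p ^ (α - 1)` and `w = n * p ^ (α - 1) * (p - 1)` gives `m + w = b + n * p ^ α`, and
`α ≤ p ^ (α - 1) ≤ m`, so the modulus is `p ^ α`.
-/

open Finset

def KummerCongruences (a : ℕ → ℤ) : Prop :=
  ∀ p e n m w : ℕ, p.Prime → 1 ≤ e → 1 ≤ n →
    p ^ (e - 1) * (p - 1) ∣ w →
    ((Nat.gcd (p ^ m) (p ^ (n * e)) : ℤ)) ∣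
      ∑ s ∈ Finset.range (n + 1), (-1 : ℤ) ^ s * (n.choose s) * a (m + s * w)

namespace KummerCongruences

variable {a : ℕ → ℤ}

theorem gcd_dvd_sub (ha : KummerCongruences a) {p e m w : ℕ} (hp : p.Prime) (he : 1 ≤ e)
    (hw : p ^ (e - 1) * (p - 1) ∣ w) :
    ((Nat.gcd (p ^ m) (p ^ e) : ℕ) : ℤ) ∣ a m - a (m + w) := by
  simpa [sum_range_succ, sub_eq_add_neg] using ha p e 1 m w hp he le_rfl hw

theorem pow_dvd_sub (ha : KummerCongruences a) {p e m w : ℕ} (hp : p.Prime) (he : 1 ≤ e)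
    (hem : e ≤ m) (hw : p ^ (e - 1) * (p - 1) ∣ w) :
    (p : ℤ) ^ e ∣ a (m + w) - a m := by
  have hpow : p ^ e ∣ Nat.gcd (p ^ m) (p ^ e) := Nat.dvd_gcd (pow_dvd_pow p hem) dvd_rfl
  rw [← neg_sub, dvd_neg]
  exact_mod_cast (Int.natCast_dvd_natCast.mpr hpow).trans (ha.gcd_dvd_sub hp he hw)

end KummerCongruences

theorem Nat.le_pow_pred {p : ℕ} (hp : 2 ≤ p) (k : ℕ) : k ≤ p ^ (k - 1) := by
  rcases k with _ | k
  · exact Nat.zero_le _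
  · exact Nat.lt_pow_self hp

theorem stmt_7 (a : ℕ → ℤ)
    (hKummer : ∀ p e n m w : ℕ, p.Prime → 1 ≤ e → 1 ≤ n →
      p ^ (e - 1) * (p - 1) ∣ w →
      ((Nat.gcd (p ^ m) (p ^ (n * e)) : ℤ)) ∣
        ∑ s ∈ Finset.range (n + 1), (-1 : ℤ) ^ s * (n.choose s) * a (m + s * w)) :
    ∀ b p n α : ℕ, 1 ≤ b → p.Prime → 0 < n → Nat.Coprime p n → 1 ≤ α →
      (p : ℤ) ^ α ∣ a (b + n * p ^ α) - a (b + n * p ^ (α - 1)) := by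
  intro b p n α _ hp hn _ hα
  obtain ⟨k, rfl⟩ : ∃ k, α = k + 1 := ⟨α - 1, by omega⟩
  have hstep : b + n * p ^ (k + 1) = b + n * p ^ k + n * p ^ k * (p - 1) := by
    obtain ⟨q, rfl⟩ := Nat.exists_eq_succ_of_ne_zero hp.ne_zero
    rw [Nat.succ_sub_one, Nat.succ_eq_add_one]
    ring
  have hle : k + 1 ≤ b + n * p ^ k :=
    calc k + 1 ≤ p ^ k := Nat.le_pow_pred hp.two_le (k + 1)
      _ ≤ n * p ^ k := Nat.le_mul_of_pos_left _ hn
      _ ≤ b + n * p ^ k := Nat.le_add_left _ _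
  rw [hstep, Nat.add_sub_cancel]
  exact KummerCongruences.pow_dvd_sub hKummer hp hα hle ⟨n, by rw [Nat.add_sub_cancel]; ring⟩
end

section
/- For any sequence of integers (a_m) satisfying, for a fixed prime p: a_{m + p^{e-1}(p-1)} ≡ a_m (mod p^e) whenever m ≥ e ≥ 1, it follows that a_{b+n·p^α} ≡ a_{b+n·p^{α-1}} (mod p^α) for all natural numbers b ≥ 1, α ≥ 1, and n coprime to p. -/
/-! The hypothesis with `e = α` says that `m ↦ a m mod p^α` is periodic with period
`φ(p^α) = p^(α-1)(p-1)` from `m = α` on. Since `n p^α = n p^(α-1) + n φ(p^α)` and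
`b + n p^(α-1) ≥ p^(α-1) ≥ α`, the two indices differ by `n` periods inside that range. -/

theorem dvd_sub_of_eventually_periodic_mod {R : Type*} [Ring R] {a : ℕ → R} {d : R}
    {m₀ s : ℕ} (h : ∀ m, m₀ ≤ m → d ∣ a (m + s) - a m) {m : ℕ} (hm : m₀ ≤ m) (k : ℕ) :
    d ∣ a (m + k * s) - a m := by
  induction k with
  | zero => simp
  | succ k ih =>
    have hstep := h (m + k * s) (hm.trans (Nat.le_add_right _ _))
    rw [add_one_mul, ← add_assoc, ← sub_add_sub_cancel _ (a (m + k * s))]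
    exact dvd_add hstep ih

theorem Nat.pow_mul_pred_add_pow {p : ℕ} (hp : 1 ≤ p) (k : ℕ) :
    p ^ k * (p - 1) + p ^ k = p ^ (k + 1) := by
  obtain ⟨q, rfl⟩ : ∃ q, p = q + 1 := ⟨p - 1, by omega⟩
  simp only [Nat.add_sub_cancel]
  ring

theorem stmt_8 (p : ℕ) (hp : p.Prime) (a : ℕ → ℤ)
    (hcong : ∀ m e : ℕ, 1 ≤ e → e ≤ m →
      (p : ℤ) ^ e ∣ a (m + p ^ (e - 1) * (p - 1)) - a m) :
    ∀ b n α : ℕ, 1 ≤ b → 1 ≤ α → 0 < n → Nat.Coprime p n →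
      (p : ℤ) ^ α ∣ a (b + n * p ^ α) - a (b + n * p ^ (α - 1)) := by
  intro b n α _ hα hn _
  obtain ⟨k, rfl⟩ : ∃ k, α = k + 1 := ⟨α - 1, by omega⟩
  have hperiodic : ∀ m, k + 1 ≤ m → (p : ℤ) ^ (k + 1) ∣ a (m + p ^ k * (p - 1)) - a m :=
    fun m hm => by simpa using hcong m (k + 1) (by omega) hm
  have hstart : k + 1 ≤ b + n * p ^ k :=
    calc k + 1 ≤ p ^ k := Nat.lt_pow_self hp.one_lt
      _ ≤ n * p ^ k := Nat.le_mul_of_pos_left _ hn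
      _ ≤ b + n * p ^ k := Nat.le_add_left _ _
  have hshift : b + n * p ^ k + n * (p ^ k * (p - 1)) = b + n * p ^ (k + 1) := by
    rw [← Nat.pow_mul_pred_add_pow hp.one_le k]
    ring
  have hdvd := dvd_sub_of_eventually_periodic_mod hperiodic hstart n
  rwa [hshift] at hdvd
end

section
/- For every prime p, every positive integer n coprime to p, and every α ≥ 1, E_{2·n·p^α} ≡ E_{2·n·p^{α-1}} (mod p^α), where E_k are the Euler numbers defined by 1/cosh(x) = Σ_{n=0}^∞ (E_n/n!) x^n. -/
/-- The power series of `cosh x = ∑ x^{2k}/(2k)!` over `ℚ`. -/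
noncomputable def coshSeries : PowerSeries ℚ :=
  PowerSeries.mk fun n => if Even n then ((n.factorial : ℚ))⁻¹ else 0

/-- The Euler numbers, defined by `1 / cosh x = ∑ Eₙ xⁿ / n!`. -/
noncomputable def eulerNumber (n : ℕ) : ℚ :=
  (n.factorial : ℚ) * PowerSeries.coeff n coshSeries⁻¹

/-!
Writing `sech x = eˣ / (1 + v)` with `v = (e^{2x} - 1)/2` and expanding geometrically gives
`E_N = ∑_{k ≤ N} (-1/2)^k Δ₂^k[m ↦ m^N](1)`, where `Δ₂` is the forward difference with step `2`.
So it suffices that `2^k p^α` divides the difference of `Δ₂^k[m^N](1)` at `N = 2np^α` and at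
`N = 2np^{α-1}`. The factor `p^α` comes from the Gauss congruence
`m^{c p^α} ≡ m^{c p^{α-1}} (mod p^α)`, applied value by value. The factor `2^k` comes from
`Δ₂^k[m^N](1) = ∑_t C(N,t) 2^t k! S(t,k)` (Stirling numbers of the second kind); for `p = 2` the
same formula even gives `2^{k+α} ∣ Δ₂^k[m^N](1)` for `k ≥ 1` and `2^α ∣ N`.
-/

open Finset PowerSeries fwdDiff
open scoped Nat

-- `Δ_[h] ^[k]` needs the space: `]^` is a token of the exterior power notation.

theorem fwdDiff_iter_succ_mul_apply_zero {R : Type*} [CommRing R] (g : R → R) (k : ℕ) :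
    Δ_[1] ^[k + 1] (fun x ↦ x * g x) 0 = (k + 1) * Δ_[1] ^[k] g 1 := by
  simp only [fwdDiff_iter_eq_sum_shift, zero_add]
  rw [sum_range_succ', mul_sum]
  simp only [zsmul_eq_mul, nsmul_eq_mul, mul_one, Nat.cast_zero, zero_mul, mul_zero, add_zero]
  refine sum_congr rfl fun j _ ↦ ?_
  have hc : ((k + 1 : ℕ) : R) * k.choose j = (k + 1).choose (j + 1) * (j + 1 : ℕ) := by
    exact_mod_cast congrArg (Nat.cast (R := R)) (Nat.add_one_mul_choose_eq k j)
  rw [Nat.add_sub_add_right, add_comm (1 : R)]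
  push_cast at hc ⊢
  linear_combination (-(-1 : R) ^ (k - j) * g (j + 1)) * hc

theorem fwdDiff_iter_apply_one {R : Type*} [CommRing R] (g : R → R) (k : ℕ) :
    Δ_[1] ^[k] g 1 = Δ_[1] ^[k] g 0 + Δ_[1] ^[k + 1] g 0 := by
  rw [Function.iterate_succ_apply', fwdDiff, zero_add, add_sub_cancel]

theorem fwdDiff_iter_pow_eq_factorial_mul_stirlingSecond {R : Type*} [CommRing R] (k t : ℕ) :
    Δ_[1] ^[k] (fun x : R ↦ x ^ t) 0 = k ! * t.stirlingSecond k := by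
  induction t generalizing k with
  | zero =>
    cases k with
    | zero => simp
    | succ k =>
      simp only [pow_zero, Function.iterate_succ_apply, fwdDiff_const]
      simp [fwdDiff_iter_eq_sum_shift]
  | succ t ih =>
    cases k with
    | zero => simp
    | succ k =>
      simp_rw [pow_succ', fwdDiff_iter_succ_mul_apply_zero, fwdDiff_iter_apply_one, ih,
        Nat.stirlingSecond_succ_succ, Nat.factorial_succ]
      push_cast
      ring

theorem Nat.dvd_mul_choose (n t : ℕ) (ht : t ≠ 0) : n ∣ t * n.choose t := by
  obtain ⟨s, rfl⟩ := Nat.exists_eq_succ_of_ne_zero ht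
  cases n with
  | zero => simp
  | succ n => exact ⟨n.choose s, by rw [mul_comm, ← Nat.add_one_mul_choose_eq]⟩

theorem Nat.two_mul_le_two_pow (v : ℕ) : 2 * v ≤ 2 ^ v := by
  cases v with
  | zero => simp
  | succ w => have := Nat.lt_two_pow_self (n := w); rw [pow_succ]; omega

theorem Nat.two_pow_half_dvd_factorial (k : ℕ) : 2 ^ (k / 2) ∣ k ! := by
  calc 2 ^ (k / 2) ∣ (2 * (k / 2))‼ := by
        rw [Nat.doubleFactorial_two_mul]; exact dvd_mul_right _ _
    _ ∣ (2 * (k / 2))! := by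
      rcases (k / 2).eq_zero_or_pos with h | h
      · simp [h]
      · obtain ⟨m, hm⟩ := Nat.exists_eq_add_of_lt h
        rw [hm, show 2 * (0 + m + 1) = 2 * m + 1 + 1 by ring, Nat.factorial_eq_mul_doubleFactorial]
        exact dvd_mul_right _ _
    _ ∣ k ! := Nat.factorial_dvd_factorial (Nat.mul_div_le k 2)

/-- With `t = 2^v u`, `u` odd: `n ∣ t C(n,t)` gives `2^α ∣ 2^v C(n,t)`, and since `2v ≤ t`,
`2^{⌊k/2⌋} ∣ k!` makes up the missing `2^k ∣ 2^{t-v} k!`. -/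
theorem two_pow_add_dvd_choose_mul_factorial {α n k t : ℕ} (hn : 2 ^ α ∣ n) (hk : k ≠ 0)
    (hkt : k ≤ t) : 2 ^ (k + α) ∣ n.choose t * 2 ^ t * k ! := by
  obtain ⟨v, u, hu, ht⟩ := Nat.exists_eq_two_pow_mul_odd (show t ≠ 0 by omega)
  have hchoose : 2 ^ α ∣ 2 ^ v * n.choose t := by
    have h : 2 ^ α ∣ u * (2 ^ v * n.choose t) := by
      rw [← mul_assoc, mul_comm u, ← ht]
      exact hn.trans (Nat.dvd_mul_choose n t (by omega))
    exact (Nat.Coprime.pow_left α (Nat.coprime_two_left.2 hu)).dvd_of_dvd_mul_left h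
  have hvt : 2 * v ≤ t := by
    have := Nat.two_mul_le_two_pow v
    have : 2 ^ v ≤ t := ht ▸ Nat.le_mul_of_pos_right _ hu.pos
    omega
  have hrest : 2 ^ k ∣ 2 ^ (t - v) * k ! := by
    have hsplit : 2 ^ k = 2 ^ (k - k / 2) * 2 ^ (k / 2) := by
      rw [← pow_add, Nat.sub_add_cancel (Nat.div_le_self k 2)]
    rw [hsplit]
    exact mul_dvd_mul (pow_dvd_pow 2 (by omega)) (Nat.two_pow_half_dvd_factorial k)
  calc 2 ^ (k + α) = 2 ^ α * 2 ^ k := by rw [pow_add, mul_comm]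
    _ ∣ (2 ^ v * n.choose t) * (2 ^ (t - v) * k !) := mul_dvd_mul hchoose hrest
    _ = n.choose t * 2 ^ t * k ! := by
      rw [← Nat.add_sub_cancel' (show v ≤ t by omega), pow_add, Nat.add_sub_cancel_left]
      ring

theorem prime_pow_dvd_pow_sub_pow {p : ℕ} (hp : p.Prime) (m : ℤ) (c β : ℕ) :
    (p : ℤ) ^ (β + 1) ∣ m ^ (c * p ^ (β + 1)) - m ^ (c * p ^ β) := by
  have h := dvd_sub_pow_of_dvd_sub (Int.ModEq.pow_prime_eq_self hp (m ^ c)).symm.dvd β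
  rwa [← pow_mul, ← pow_mul, ← pow_mul, ← pow_succ'] at h

def oddPowDiff (k n : ℕ) : ℤ := Δ_[2] ^[k] (fun m : ℤ ↦ m ^ n) 1

theorem oddPowDiff_eq_sum_stirlingSecond (k n : ℕ) :
    oddPowDiff k n =
      ((∑ t ∈ range (n + 1), n.choose t * 2 ^ t * (k ! * t.stirlingSecond k) : ℕ) : ℤ) := by
  have hshift : oddPowDiff k n = Δ_[1] ^[k] (fun x : ℤ ↦ (2 * x + 1) ^ n) 0 := by
    simp [oddPowDiff, fwdDiff_iter_eq_sum_shift, mul_comm, add_comm]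
  have hexpand : (fun x : ℤ ↦ (2 * x + 1) ^ n) =
      ∑ t ∈ range (n + 1), ((n.choose t * 2 ^ t : ℕ) : ℤ) • fun x : ℤ ↦ x ^ t := by
    ext x
    simp only [add_pow, one_pow, mul_one, Finset.sum_apply, Pi.smul_apply, smul_eq_mul]
    refine sum_congr rfl fun t _ ↦ ?_
    push_cast
    ring
  rw [hshift, hexpand, fwdDiff_iter_finsetSum, Finset.sum_apply]
  simp only [fwdDiff_iter_const_smul, Pi.smul_apply,
    fwdDiff_iter_pow_eq_factorial_mul_stirlingSecond]
  push_cast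
  simp [mul_assoc]

theorem two_pow_dvd_oddPowDiff (k n : ℕ) : 2 ^ k ∣ oddPowDiff k n := by
  rw [oddPowDiff_eq_sum_stirlingSecond]
  refine Int.natCast_dvd_natCast.2 (Finset.dvd_sum fun t _ ↦ ?_)
  rcases lt_or_ge t k with htk | hkt
  · simp [Nat.stirlingSecond_eq_zero_of_lt htk]
  · exact ((pow_dvd_pow 2 hkt).mul_left _).mul_right _

theorem two_pow_add_dvd_oddPowDiff {α n k : ℕ} (hn : 2 ^ α ∣ n) (hk : k ≠ 0) :
    2 ^ (k + α) ∣ oddPowDiff k n := by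
  rw [oddPowDiff_eq_sum_stirlingSecond]
  refine Int.natCast_dvd_natCast.2 (Finset.dvd_sum fun t _ ↦ ?_)
  rcases lt_or_ge t k with htk | hkt
  · simp [Nat.stirlingSecond_eq_zero_of_lt htk]
  · rw [← mul_assoc]
    exact (two_pow_add_dvd_choose_mul_factorial hn hk hkt).mul_right _

theorem prime_pow_dvd_oddPowDiff_sub {p : ℕ} (hp : p.Prime) (k c β : ℕ) :
    (p : ℤ) ^ (β + 1) ∣ oddPowDiff k (c * p ^ (β + 1)) - oddPowDiff k (c * p ^ β) := by
  simp only [oddPowDiff, fwdDiff_iter_eq_sum_shift, ← sum_sub_distrib, ← smul_sub]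
  refine Finset.dvd_sum fun j _ ↦ ?_
  rw [zsmul_eq_mul]
  exact (prime_pow_dvd_pow_sub_pow hp _ c β).mul_left _

theorem dvd_oddPowDiff_sub {p : ℕ} (hp : p.Prime) (k c β : ℕ) :
    2 ^ k * (p : ℤ) ^ (β + 1) ∣
      oddPowDiff k (2 * c * p ^ (β + 1)) - oddPowDiff k (2 * c * p ^ β) := by
  rcases hp.eq_two_or_odd' with rfl | hodd
  · rcases eq_or_ne k 0 with rfl | hk
    · simp [oddPowDiff]
    · rw [Nat.cast_ofNat, ← pow_add]
      exact dvd_sub (two_pow_add_dvd_oddPowDiff (by rw [pow_succ]; exact ⟨2 * c, by ring⟩) hk)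
        (two_pow_add_dvd_oddPowDiff ⟨c, by ring⟩ hk)
  · have hcop : IsCoprime (2 ^ k : ℤ) ((p : ℤ) ^ (β + 1)) :=
      (Nat.isCoprime_iff_coprime.2 (Nat.coprime_two_left.2 hodd)).pow
    exact hcop.mul_dvd (dvd_sub (two_pow_dvd_oddPowDiff _ _) (two_pow_dvd_oddPowDiff _ _))
      (prime_pow_dvd_oddPowDiff_sub hp k (2 * c) β)

noncomputable def expChar : AddChar ℤ (PowerSeries ℚ) where
  toFun m := rescale (m : ℚ) (exp ℚ)
  map_zero_eq_one' := by simp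
  map_add_eq_mul' a b := by rw [Int.cast_add, exp_mul_exp_eq_exp_add]

theorem coeff_expChar (m : ℤ) (n : ℕ) : coeff n (expChar m) = (m : ℚ) ^ n / n ! := by
  simp [expChar, coeff_rescale, coeff_exp, div_eq_mul_inv]

theorem constantCoeff_expChar (m : ℤ) : constantCoeff (expChar m) = 1 := by
  rw [← coeff_zero_eq_constantCoeff_apply, coeff_expChar]
  simp

theorem coeff_fwdDiff_iter_expChar (k n : ℕ) :
    coeff n (Δ_[2] ^[k] expChar 1) = oddPowDiff k n / n ! := by
  simp only [oddPowDiff, fwdDiff_iter_eq_sum_shift, map_sum, map_zsmul, coeff_expChar]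
  push_cast
  rw [sum_div]
  refine sum_congr rfl fun j _ ↦ ?_
  simp only [zsmul_eq_mul]
  push_cast
  ring

theorem coshSeries_eq : coshSeries = (2⁻¹ : ℚ) • (expChar 1 + expChar (-1)) := by
  ext n
  simp only [coshSeries, coeff_mk, map_smul, map_add, coeff_expChar, smul_eq_mul]
  rcases n.even_or_odd with h | h
  · simp only [h, h.neg_one_pow, ↓reduceIte, Int.cast_one, Int.cast_neg, one_pow]
    ring
  · simp [h.neg_one_pow, Nat.not_even_iff_odd.2 h, neg_div]

theorem coshSeries_mul_expChar_one :
    coshSeries * expChar 1 = 1 + (2⁻¹ : ℚ) • (expChar 2 - 1) := by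
  rw [coshSeries_eq, smul_mul_assoc, add_mul, ← AddChar.map_add_eq_mul,
    ← AddChar.map_add_eq_mul, neg_add_cancel, AddChar.map_zero_eq_one, one_add_one_eq_two]
  module

theorem eulerNumber_eq_sum_oddPowDiff {n K : ℕ} (hK : n < K) :
    eulerNumber n = ∑ k ∈ range K, (-1 / 2 : ℚ) ^ k * oddPowDiff k n := by
  set v : PowerSeries ℚ := (2⁻¹ : ℚ) • (expChar 2 - 1)
  set G := expChar 1 * ∑ k ∈ range K, (-v) ^ k
  -- `G` inverts `cosh` up to `(-v)^K`, which is invisible below degree `K` since `X ∣ v`.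
  have hG : coshSeries * G = 1 - (-v) ^ K := by
    rw [← mul_assoc, coshSeries_mul_expChar_one, ← sub_neg_eq_add 1 v, mul_neg_geom_sum]
  have hcosh : constantCoeff coshSeries ≠ 0 := by simp [coshSeries]
  have hsech : coshSeries⁻¹ = G + coshSeries⁻¹ * (-v) ^ K := by
    have hG' : G = coshSeries⁻¹ * (1 - (-v) ^ K) := by
      rw [← hG, ← mul_assoc, PowerSeries.inv_mul_cancel _ hcosh, one_mul]
    rw [hG']
    ring
  have htail : coeff n (coshSeries⁻¹ * (-v) ^ K) = 0 := by
    have hX : X ∣ -v := by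
      rw [X_dvd_iff]
      simp [v, constantCoeff_expChar]
    exact X_pow_dvd_iff.1 ((pow_dvd_pow_of_dvd hX K).mul_left _) n hK
  have hGcoeff : coeff n G = ∑ k ∈ range K, (-1 / 2 : ℚ) ^ k * (oddPowDiff k n / n !) := by
    simp only [G, mul_sum, map_sum]
    refine sum_congr rfl fun k _ ↦ ?_
    have hv : -v = (-1 / 2 : ℚ) • (expChar 2 - 1) := by
      simp only [v]
      module
    rw [hv, smul_pow, mul_smul_comm, map_smul, smul_eq_mul, mul_comm (expChar 1),
      ← fwdDiff_addChar_eq, coeff_fwdDiff_iter_expChar]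
  rw [eulerNumber, hsech, map_add, htail, add_zero, hGcoeff, mul_sum]
  refine sum_congr rfl fun k _ ↦ ?_
  field_simp

theorem stmt_10_general (p n α : ℕ) (hp : p.Prime) (hα : 1 ≤ α) :
    ∃ k : ℤ, eulerNumber (2 * n * p ^ α) - eulerNumber (2 * n * p ^ (α - 1)) =
      (k : ℚ) * (p : ℚ) ^ α := by
  obtain ⟨β, rfl⟩ := Nat.exists_eq_add_of_le' hα
  rw [Nat.add_sub_cancel]
  set N := 2 * n * p ^ (β + 1)
  have hMN : 2 * n * p ^ β < N + 1 :=
    Nat.lt_add_one_of_le (Nat.mul_le_mul_left _ (Nat.pow_le_pow_right hp.pos β.le_succ))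
  choose q hq using fun k ↦ dvd_oddPowDiff_sub hp k n β
  refine ⟨∑ k ∈ range (N + 1), (-1) ^ k * q k, ?_⟩
  rw [eulerNumber_eq_sum_oddPowDiff (lt_add_one N), eulerNumber_eq_sum_oddPowDiff hMN,
    ← sum_sub_distrib, Int.cast_sum, sum_mul]
  refine sum_congr rfl fun k _ ↦ ?_
  have hsign : (-1 / 2 : ℚ) ^ k * 2 ^ k = (-1) ^ k := by rw [← mul_pow]; norm_num
  rw [← mul_sub, ← Int.cast_sub, hq k]
  push_cast
  linear_combination ((p : ℚ) ^ (β + 1) * q k) * hsign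

theorem stmt_10 (p n α : ℕ) (hp : p.Prime) (hn : 0 < n)
    (hcop : Nat.Coprime p n) (hα : 1 ≤ α) :
    ∃ k : ℤ, eulerNumber (2 * n * p ^ α) - eulerNumber (2 * n * p ^ (α - 1)) =
      (k : ℚ) * (p : ℚ) ^ α :=
  stmt_10_general p n α hp hα
end

section
/- For every positive integer n, Σ_{d|n} μ(n/d)·2^{4d-3} is a non-negative integer divisible by n. -/
/-!
The sequence `a d = 2 ^ (4d - 3)` satisfies the Gauss congruences
`a (p m) ≡ a m [ZMOD p ^ v_p(p m)]`: for odd `p` because `8 a d = 16 ^ d` and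
`b ^ (p ^ (j+1) c) ≡ b ^ (p ^ j c) [ZMOD p ^ (j+1)]` for every integer `b` (Fermat, lifted),
and for `p = 2` because both terms are divisible by a large power of `2`.
For any sequence with the Gauss congruences and any `p ^ k ∣ n`, write the Möbius sum as
`∑_{e ∣ n} μ e a (n / e)` and pair each `e` prime to `p` with `p e`; all other terms vanish, and
each pair contributes `μ e (a (n / e) - a (n / (p e)))`, a multiple of `p ^ k`.
Nonnegativity holds because `a` at least doubles at each step, so the term `a n` outweighs all
the others.
-/

open Finset ArithmeticFunction
open scoped ArithmeticFunction.Moebius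

namespace ArithmeticFunction

theorem moebius_prime_mul_of_not_dvd {p e : ℕ} (hp : p.Prime) (hpe : ¬ p ∣ e) :
    μ (p * e) = -μ e := by
  rw [isMultiplicative_moebius.map_mul_of_coprime ((Nat.Prime.coprime_iff_not_dvd hp).mpr hpe),
    moebius_apply_prime hp, neg_one_mul]

theorem moebius_eq_zero_of_mul_self_dvd {p d : ℕ} (hp : p.Prime) (h : p * p ∣ d) : μ d = 0 :=
  moebius_eq_zero_of_not_squarefree fun hsq => hp.not_isUnit (hsq p h)

end ArithmeticFunction

theorem Nat.sum_divisors_eq_sum_not_dvd_add {M : Type*} [AddCommMonoid M] {n p : ℕ}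
    (hp : p.Prime) (hpn : p ∣ n) (f : ℕ → M) (hf : ∀ d, p * p ∣ d → f d = 0) :
    ∑ d ∈ n.divisors, f d = ∑ e ∈ n.divisors with ¬ p ∣ e, (f e + f (p * e)) := by
  set A := n.divisors.filter (¬ p ∣ ·)
  have hmul_mem : ∀ e ∈ A, p * e ∈ n.divisors := fun e he => by
    obtain ⟨he, hpe⟩ := mem_filter.mp he
    exact Nat.mem_divisors.mpr ⟨((Nat.Prime.coprime_iff_not_dvd hp).mpr hpe).mul_dvd_of_dvd_of_dvd
      hpn (Nat.dvd_of_mem_divisors he), (Nat.mem_divisors.mp he).2⟩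
  have hdisj : Disjoint A (A.image (p * ·)) := by
    refine disjoint_left.mpr fun d hdA hdpA => ?_
    obtain ⟨e, -, rfl⟩ := mem_image.mp hdpA
    exact (mem_filter.mp hdA).2 (dvd_mul_right p e)
  rw [sum_add_distrib, ← sum_image (fun x _ y _ h => Nat.eq_of_mul_eq_mul_left hp.pos h),
    ← sum_union hdisj]
  refine (sum_subset (union_subset (filter_subset _ _) fun d hd => ?_) fun d hd hdA => ?_).symm
  · obtain ⟨e, he, rfl⟩ := mem_image.mp hd
    exact hmul_mem e he
  · obtain ⟨e, rfl⟩ : p ∣ d := by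
      by_contra hpd
      exact hdA (mem_union_left _ (mem_filter.mpr ⟨hd, hpd⟩))
    have he : e ∈ n.divisors := Nat.mem_divisors.mpr
      ⟨(dvd_mul_left e p).trans (Nat.dvd_of_mem_divisors hd), (Nat.mem_divisors.mp hd).2⟩
    have hpe : p ∣ e := by
      by_contra hpe
      exact hdA (mem_union_right _ (mem_image.mpr ⟨e, mem_filter.mpr ⟨he, hpe⟩, rfl⟩))
    exact hf _ (mul_dvd_mul_left p hpe)

/-- The Gauss congruences `a (p m) ≡ a m [ZMOD p ^ v_p(p m)]`, stated for every `p ^ k ∣ p m`. -/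
def GaussCongruence (a : ℕ → ℤ) : Prop :=
  ∀ p k m : ℕ, p.Prime → p ^ k ∣ p * m → (p : ℤ) ^ k ∣ a (p * m) - a m

namespace GaussCongruence

variable {a : ℕ → ℤ}

theorem prime_pow_dvd_sum_moebius (ha : GaussCongruence a) {n p k : ℕ} (hp : p.Prime)
    (hpk : p ^ k ∣ n) : (p : ℤ) ^ k ∣ ∑ d ∈ n.divisors, μ (n / d) * a d := by
  rcases Nat.eq_zero_or_pos k with rfl | hk
  · simp
  have hpn : p ∣ n := (dvd_pow_self p hk.ne').trans hpk
  rw [← Nat.sum_div_divisors, sum_congr rfl fun d hd => by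
      rw [Nat.div_div_self (Nat.dvd_of_mem_divisors hd) (Nat.mem_divisors.mp hd).2],
    Nat.sum_divisors_eq_sum_not_dvd_add hp hpn _
      fun d hd => by rw [moebius_eq_zero_of_mul_self_dvd hp hd, zero_mul]]
  refine dvd_sum fun e he => ?_
  obtain ⟨he, hpe⟩ := mem_filter.mp he
  have hcop : Nat.Coprime p e := (Nat.Prime.coprime_iff_not_dvd hp).mpr hpe
  obtain ⟨q, rfl⟩ : p * e ∣ n := hcop.mul_dvd_of_dvd_of_dvd hpn (Nat.dvd_of_mem_divisors he)
  have he0 : 0 < e := Nat.pos_of_mem_divisors he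
  have hgauss : (p : ℤ) ^ k ∣ a (p * q) - a q := by
    refine ha p k q hp ((hcop.pow_left k).dvd_of_dvd_mul_right ?_)
    rwa [mul_right_comm] at hpk
  rw [moebius_prime_mul_of_not_dvd hp hpe, mul_right_comm, Nat.mul_div_cancel _ he0,
    mul_right_comm, Nat.mul_div_cancel_left q (Nat.mul_pos hp.pos he0)]
  convert dvd_mul_of_dvd_right hgauss (μ e) using 1
  ring

theorem dvd_sum_moebius (ha : GaussCongruence a) (n : ℕ) :
    (n : ℤ) ∣ ∑ d ∈ n.divisors, μ (n / d) * a d := by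
  rw [Int.natCast_dvd, Nat.dvd_iff_prime_pow_dvd_dvd]
  intro p k hp hpk
  rw [← Int.natCast_dvd, Nat.cast_pow]
  exact ha.prime_pow_dvd_sum_moebius hp hpk

end GaussCongruence

theorem gaussCongruence_pow (b : ℤ) : GaussCongruence (b ^ ·) := by
  intro p k m hp hpk
  rcases k with _ | j
  · exact one_dvd _
  obtain ⟨c, rfl⟩ : p ^ j ∣ m := by
    rw [pow_succ'] at hpk
    exact Nat.dvd_of_mul_dvd_mul_left hp.pos hpk
  have hfermat : (p : ℤ) ∣ (b ^ c) ^ p - b ^ c :=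
    Int.ModEq.dvd (Int.ModEq.pow_prime_eq_self hp (b ^ c)).symm
  show (p : ℤ) ^ (j + 1) ∣ b ^ (p * (p ^ j * c)) - b ^ (p ^ j * c)
  rw [show p * (p ^ j * c) = c * p * p ^ j by ring, mul_comm (p ^ j), pow_mul, pow_mul, pow_mul]
  exact_mod_cast dvd_sub_pow_of_dvd_sub hfermat j

theorem gaussCongruence_two_pow_four_mul_sub_three :
    GaussCongruence fun d => 2 ^ (4 * d - 3) := by
  intro p k m hp hpk
  rcases Nat.eq_zero_or_pos m with rfl | hm
  · simp
  by_cases hp2 : p = 2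
  · subst hp2
    have hk : k ≤ 4 * m - 3 := by
      have := (Nat.le_of_dvd (by omega) hpk).trans_lt' (Nat.lt_two_pow_self (n := k))
      omega
    push_cast
    exact dvd_sub (pow_dvd_pow 2 (by omega)) (pow_dvd_pow 2 hk)
  · have hcop : IsCoprime ((p : ℤ) ^ k) 8 := by
      rw [show (8 : ℤ) = ((2 ^ 3 : ℕ) : ℤ) by norm_num]
      exact (Nat.isCoprime_iff_coprime.mpr ((Nat.coprime_primes hp Nat.prime_two).mpr hp2)).pow
    refine hcop.dvd_of_dvd_mul_left ?_
    have h16 : ∀ d, 0 < d → 8 * (2 : ℤ) ^ (4 * d - 3) = 16 ^ d := fun d hd => by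
      rw [show (16 : ℤ) = 2 ^ 4 by norm_num, ← pow_mul, show (8 : ℤ) = 2 ^ 3 by norm_num,
        ← pow_add]
      congr 1
      omega
    rw [mul_sub, h16 _ (Nat.mul_pos hp.pos hm), h16 _ hm]
    exact gaussCongruence_pow 16 p k m hp hpk

theorem sum_Ico_one_le_of_two_mul_le {a : ℕ → ℤ} (ha : ∀ d, 0 ≤ a d)
    (hdouble : ∀ d, 2 * a d ≤ a (d + 1)) (n : ℕ) : ∑ d ∈ Ico 1 n, a d ≤ a n := by
  induction n with
  | zero => simpa using ha 0
  | succ n ih =>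
    rcases Nat.eq_zero_or_pos n with rfl | hn
    · simpa using ha 1
    rw [sum_Ico_succ_top hn]
    linarith [hdouble n]

theorem sum_moebius_mul_nonneg_of_two_mul_le {a : ℕ → ℤ} (ha : ∀ d, 0 ≤ a d)
    (hdouble : ∀ d, 2 * a d ≤ a (d + 1)) (n : ℕ) :
    0 ≤ ∑ d ∈ n.divisors, μ (n / d) * a d := by
  rcases eq_or_ne n 0 with rfl | hn
  · simp
  rw [← Nat.insert_self_properDivisors hn, sum_insert Nat.self_notMem_properDivisors,
    Nat.div_self (Nat.pos_of_ne_zero hn), moebius_apply_one, one_mul]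
  have hterm : ∀ d ∈ n.properDivisors, -a d ≤ μ (n / d) * a d := fun d _ => by
    simpa using mul_le_mul_of_nonneg_right (abs_le.mp abs_moebius_le_one).1 (ha d)
  have hproper : ∑ d ∈ n.properDivisors, a d ≤ ∑ d ∈ Ico 1 n, a d :=
    sum_le_sum_of_subset_of_nonneg (filter_subset _ _) fun d _ _ => ha d
  linarith [sum_le_sum hterm, sum_neg_distrib (s := n.properDivisors) (f := a),
    sum_Ico_one_le_of_two_mul_le ha hdouble n]

theorem stmt_15 :
    ∀ n : ℕ, 1 ≤ n → ∃ k : ℕ,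
      ∑ d ∈ n.divisors, moebius (n / d) * (2 : ℤ) ^ (4 * d - 3) =
        (n : ℤ) * (k : ℤ) := by
  intro n hn
  obtain ⟨c, hc⟩ := gaussCongruence_two_pow_four_mul_sub_three.dvd_sum_moebius n
  have hnonneg := sum_moebius_mul_nonneg_of_two_mul_le (a := fun d => (2 : ℤ) ^ (4 * d - 3))
    (fun d => by positivity)
    (fun d => by rw [← pow_succ']; exact pow_le_pow_right₀ (by norm_num) (by omega)) n
  rw [hc] at hnonneg
  have hc0 : 0 ≤ c := nonneg_of_mul_nonneg_right hnonneg (by exact_mod_cast hn)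
  exact ⟨c.toNat, by rw [Int.toNat_of_nonneg hc0, hc]⟩
end

section
/- Define λ_n by λ_0 = 1 and (n+1)·λ_{n+1} = Σ_{k=0}^n 2^{4k+1}·|E_{2k+2}|·λ_{n-k}, where E_m are the Euler numbers. Then ν₂(λ_n) = s(n) for every n, where ν₂ is the 2-adic valuation and s(n) is the binary digit sum of n. -/
open Finset ArithmeticFunction

/-!
Comparing coefficients of `xⁿ/n!` in `cosh x · (1 / cosh x) = 1` gives the binomial recurrence
`∑_{k even} C(n,k) E_{n-k} = [n = 0]`, so the Euler numbers are integers and `E₂ = -1`.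

Write `n! λₙ = 2ⁿ uₙ`. Multiplying the recurrence by `m!` and using `m! = C(m,k) k! (m-k)!` gives
`u_{m+1} = ∑_k C(m,k) k! 2^{3k} |E_{2k+2}| u_{m-k}`, where every term with `k ≥ 1` is even and the
term `k = 0` is `u_m`. Hence every `uₙ` is an odd integer, and Legendre's formula
`ν₂(n!) = n - s(n)` gives `ν₂(λₙ) = n - ν₂(n!) = s(n)`.
-/

open Nat

lemma constantCoeff_coshSeries : PowerSeries.constantCoeff coshSeries = 1 := by
  simp [coshSeries]

lemma sum_choose_mul_eulerNumber (n : ℕ) :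
    ∑ k ∈ range (n + 1), (if Even k then (n.choose k : ℚ) else 0) * eulerNumber (n - k) =
      if n = 0 then 1 else 0 := by
  have h := congrArg (fun f => (n ! : ℚ) * PowerSeries.coeff n f)
    (PowerSeries.mul_inv_cancel coshSeries (by simp [constantCoeff_coshSeries]))
  simp only [PowerSeries.coeff_mul, PowerSeries.coeff_one, mul_sum, mul_ite, mul_one, mul_zero,
    Nat.sum_antidiagonal_eq_sum_range_succ
      (fun i j => PowerSeries.coeff i coshSeries * PowerSeries.coeff j coshSeries⁻¹)] at h
  have hrhs : (if n = 0 then (n ! : ℚ) else 0) = if n = 0 then 1 else 0 := by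
    split_ifs with hn <;> simp [hn]
  rw [← hrhs, ← h]
  refine sum_congr rfl fun k hk => ?_
  have hkn : k ≤ n := Nat.lt_succ_iff.mp (mem_range.mp hk)
  rw [eulerNumber, coshSeries, PowerSeries.coeff_mk]
  split_ifs
  · rw [← Nat.choose_mul_factorial_mul_factorial hkn]
    push_cast
    field_simp
  · simp

lemma eulerNumber_zero : eulerNumber 0 = 1 := by
  simpa using sum_choose_mul_eulerNumber 0

lemma eulerNumber_two : eulerNumber 2 = -1 := by
  simpa [sum_range_succ, eulerNumber_zero, add_eq_zero_iff_eq_neg] using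
    sum_choose_mul_eulerNumber 2

lemma eulerNumber_mem_range_intCast (n : ℕ) : eulerNumber n ∈ (Int.castRingHom ℚ).range := by
  induction n using Nat.strong_induction_on with
  | _ n ih =>
    rcases eq_or_ne n 0 with rfl | hn
    · rw [eulerNumber_zero]
      exact one_mem _
    have h := sum_choose_mul_eulerNumber n
    rw [sum_range_succ', if_neg hn] at h
    simp only [Even.zero, if_true, Nat.choose_zero_right, Nat.cast_one, one_mul,
      Nat.sub_zero] at h
    rw [eq_neg_of_add_eq_zero_right h]
    refine neg_mem (sum_mem fun k hk => mul_mem ?_ (ih _ (by omega)))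
    split_ifs
    · exact natCast_mem _ _
    · exact zero_mem _

theorem exists_odd_factorial_mul_eq_two_pow_mul (a : ℕ → ℚ) (c : ℕ → ℤ) (ha0 : a 0 = 1)
    (hc0 : Odd (c 0)) (hc : ∀ k, Even (c (k + 1)))
    (hrec : ∀ m : ℕ, (m + 1 : ℚ) * a (m + 1) =
      ∑ k ∈ range (m + 1), 2 ^ (k + 1) * c k * a (m - k)) (n : ℕ) :
    ∃ u : ℤ, Odd u ∧ (n ! : ℚ) * a n = 2 ^ n * u := by
  induction n using Nat.strong_induction_on with
  | _ n ih =>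
    rcases n with _ | m
    · exact ⟨1, odd_one, by simp [ha0]⟩
    choose u hu hau using fun k : ℕ => ih (m - k) (by omega)
    set t : ℕ → ℤ := fun k => m.choose k * k ! * c k * u k
    have hterm : ∀ k ∈ range (m + 1),
        (m ! : ℚ) * (2 ^ (k + 1) * c k * a (m - k)) = 2 ^ (m + 1) * t k := by
      intro k hk
      have hkm : k ≤ m := Nat.lt_succ_iff.mp (mem_range.mp hk)
      calc (m ! : ℚ) * (2 ^ (k + 1) * c k * a (m - k))
          = m.choose k * k ! * c k * 2 ^ (k + 1) * ((m - k)! * a (m - k)) := by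
            rw [← Nat.choose_mul_factorial_mul_factorial hkm]; push_cast; ring
        _ = m.choose k * k ! * c k * u k * (2 ^ (k + 1) * 2 ^ (m - k)) := by rw [hau]; ring
        _ = 2 ^ (m + 1) * t k := by
            rw [← pow_add, Nat.add_right_comm, Nat.add_sub_cancel' hkm]; push_cast [t]; ring
    refine ⟨∑ k ∈ range (m + 1), t k, ?_, ?_⟩
    · rw [sum_range_succ']
      refine Even.add_odd (Finset.even_sum _ fun k _ => ?_) (by simpa [t] using hc0.mul (hu 0))
      exact ((hc k).mul_left _).mul_right _
    · calc ((m + 1)! : ℚ) * a (m + 1) = m ! * ((m + 1 : ℚ) * a (m + 1)) := by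
            push_cast [Nat.factorial_succ]; ring
        _ = 2 ^ (m + 1) * ∑ k ∈ range (m + 1), t k := by
            rw [hrec, mul_sum, sum_congr rfl hterm, ← mul_sum]; push_cast; rfl

lemma padicValRat_two_eq_digits_sum {x : ℚ} {n : ℕ} {u : ℤ} (hu : Odd u)
    (hx : (n ! : ℚ) * x = 2 ^ n * u) : padicValRat 2 x = ((Nat.digits 2 n).sum : ℤ) := by
  have hu0 : (u : ℚ) ≠ 0 := Int.cast_ne_zero.mpr (by rintro rfl; simp at hu)
  have hx0 : x ≠ 0 := by rintro rfl; simp [hu0] at hx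
  have htwo : padicValRat 2 2 = 1 := by exact_mod_cast padicValRat.self (p := 2) one_lt_two
  have hval := congrArg (padicValRat 2) hx
  rw [padicValRat.mul (by positivity) hx0, padicValRat.mul (by positivity) hu0,
    padicValRat.pow, htwo, padicValRat.of_int,
    padicValInt.eq_zero_of_not_dvd (by simpa [← even_iff_two_dvd] using hu), padicValRat.of_nat]
    at hval
  have hlegendre := sub_one_mul_padicValNat_factorial (p := 2) n
  have hle := Nat.digit_sum_le 2 n
  omega

theorem stmt_19 (lam : ℕ → ℚ) (h0 : lam 0 = 1)
    (hrec : ∀ n : ℕ, (n + 1 : ℚ) * lam (n + 1) =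
      ∑ k ∈ Finset.range (n + 1),
        2 ^ (4 * k + 1) * |eulerNumber (2 * k + 2)| * lam (n - k)) :
    ∀ n : ℕ, padicValRat 2 (lam n) = ((Nat.digits 2 n).sum : ℤ) := by
  choose e he using fun k => eulerNumber_mem_range_intCast (2 * k + 2)
  simp only [eq_intCast] at he
  have he0 : e 0 = -1 := by exact_mod_cast (he 0).trans eulerNumber_two
  have hlam := exists_odd_factorial_mul_eq_two_pow_mul lam (fun k => 2 ^ (3 * k) * |e k|) h0
    (by simp [he0]) (fun k => (Int.even_pow.mpr ⟨even_two, by omega⟩).mul_right _)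
    (fun m => by
      rw [hrec m]
      refine sum_congr rfl fun k _ => ?_
      rw [← he k]
      push_cast
      ring)
  intro n
  obtain ⟨u, hu, hun⟩ := hlam n
  exact padicValRat_two_eq_digits_sum hu hun
end
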